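/- arXiv:2205.12344 — 3 statements merged into one kernel-verified Lean document; each statement's English description precedes it below -/
import Mathlib

section
/- For all r ≥ 0 with r ≠ 1, the rescaled filter transfer function β̄(r) = (1/π)∫₀^{2π}(cos t − 1/4)cos(rt) dt satisfies |β̄(r)| < 1. -/
/-!
Product-to-sum turns the integral into `sin (2πr) (3r² + 1) / (4r (r² - 1))` for `r > 0`
(and `-π/2` at `r = 0`), so the claim is `|sin (2πr)| (3r² + 1) < 4πr |r² - 1|`. Integrating
`cos t ≤ 1 - 2t²/π²` gives `|sin (2πs)| ≤ 2π|s| (1 - 8s²/3)` for `|s| ≤ 1/2`; with `s = r` for small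
`r` and `s = r - 1` near the resonance, where both sides vanish to first order, this suffices, and
for `r > 3/2` the bound `|sin| ≤ 1` does.
-/

open Real

theorem integral_cos_mul {c : ℝ} (hc : c ≠ 0) (a b : ℝ) :
    ∫ t in a..b, cos (c * t) = (sin (c * b) - sin (c * a)) / c := by
  rw [intervalIntegral.integral_comp_mul_left (fun t ↦ cos t) hc, integral_cos, smul_eq_mul,
    inv_mul_eq_div]

theorem integral_cos_sub_quarter_mul_cos {r : ℝ} (hr0 : r ≠ 0) (hr1 : r ≠ 1) (hr1' : r ≠ -1) :
    ∫ t in (0:ℝ)..(2 * π), (cos t - 1 / 4) * cos (r * t)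
      = sin (2 * π * r) * (3 * r ^ 2 + 1) / (4 * r * (r ^ 2 - 1)) := by
  have hadd : 1 + r ≠ 0 := by contrapose! hr1'; linarith
  have hsub : 1 - r ≠ 0 := sub_ne_zero.2 hr1.symm
  have product_to_sum (t : ℝ) : (cos t - 1 / 4) * cos (r * t)
      = cos ((1 + r) * t) / 2 + cos ((1 - r) * t) / 2 - cos (r * t) / 4 := by
    rw [add_mul, one_mul, cos_add, sub_mul _ r, one_mul, cos_sub]; ring
  have hint (c : ℝ) : IntervalIntegrable (fun t ↦ cos (c * t) / 2) MeasureTheory.volume 0 (2 * π) :=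
    (by fun_prop : Continuous _).intervalIntegrable _ _
  simp_rw [product_to_sum]
  rw [intervalIntegral.integral_sub ((hint _).add (hint _))
      ((by fun_prop : Continuous _).intervalIntegrable _ _), intervalIntegral.integral_add
      (hint _) (hint _)]
  simp only [intervalIntegral.integral_div]
  rw [integral_cos_mul hadd, integral_cos_mul hsub, integral_cos_mul hr0]
  have h1 : sin ((1 + r) * (2 * π)) = sin (2 * π * r) := by
    rw [show (1 + r) * (2 * π) = 2 * π * r + 2 * π by ring, sin_add_two_pi]
  have h2 : sin ((1 - r) * (2 * π)) = -sin (2 * π * r) := by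
    rw [show (1 - r) * (2 * π) = 2 * π - 2 * π * r by ring, sin_two_pi_sub]
  have hsq : r ^ 2 - 1 ≠ 0 := by
    rw [show r ^ 2 - 1 = -((1 + r) * (1 - r)) by ring]; exact neg_ne_zero.2 (mul_ne_zero hadd hsub)
  rw [h1, h2, mul_comm r (2 * π)]
  simp only [mul_zero, sin_zero, sub_zero]
  field_simp
  ring

theorem sin_le_sub_mul_cube {x : ℝ} (hx0 : 0 ≤ x) (hxπ : x ≤ π) :
    sin x ≤ x - 2 / (3 * π ^ 2) * x ^ 3 := by
  have hcos : ∫ t in (0:ℝ)..x, cos t ≤ ∫ t in (0:ℝ)..x, (1 - 2 / π ^ 2 * t ^ 2) := by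
    refine intervalIntegral.integral_mono_on hx0 (continuous_cos.intervalIntegrable _ _)
      ((by fun_prop : Continuous _).intervalIntegrable _ _) fun t ht ↦ ?_
    exact cos_le_one_sub_mul_cos_sq (abs_le.2 ⟨by linarith [ht.1, pi_pos], by linarith [ht.2]⟩)
  rw [intervalIntegral.integral_sub intervalIntegrable_const
    ((by fun_prop : Continuous _).intervalIntegrable _ _), intervalIntegral.integral_const_mul,
    integral_pow, integral_cos] at hcos
  simp only [sin_zero, sub_zero, intervalIntegral.integral_const, smul_eq_mul, mul_one] at hcos
  convert hcos using 1
  norm_num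
  ring

theorem abs_sin_two_pi_mul_le {s : ℝ} (hs : |s| ≤ 1 / 2) :
    |sin (2 * π * s)| ≤ 2 * π * |s| * (1 - 8 / 3 * s ^ 2) := by
  have hπ := pi_pos
  have habs : |2 * π * s| = 2 * π * |s| := by rw [abs_mul, abs_of_pos (by positivity)]
  have hle : |2 * π * s| ≤ π := by rw [habs]; nlinarith
  rw [abs_sin_eq_sin_abs_of_abs_le_pi hle]
  refine (sin_le_sub_mul_cube (abs_nonneg _) hle).trans_eq ?_
  rw [habs, ← sq_abs s]
  field_simp
  ring

theorem abs_sin_two_pi_mul_mul_lt {r : ℝ} (hr0 : 0 < r) (hr1 : r ≠ 1) :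
    |sin (2 * π * r)| * (3 * r ^ 2 + 1) < 4 * π * r * |r ^ 2 - 1| := by
  have hπ := pi_pos
  have hfactor : |r ^ 2 - 1| = |r - 1| * (r + 1) := by
    rw [show r ^ 2 - 1 = (r - 1) * (r + 1) by ring, abs_mul, abs_of_pos (by linarith : 0 < r + 1)]
  rcases le_or_gt r (1 / 2) with hsmall | hmid
  · have hs := abs_sin_two_pi_mul_le (s := r) (by rwa [abs_of_pos hr0])
    rw [abs_of_pos hr0] at hs
    rw [abs_of_neg (by nlinarith : r ^ 2 - 1 < 0)]
    have hpoly : 0 < 24 * r ^ 4 - 7 * r ^ 2 + 3 := by nlinarith [sq_nonneg (r ^ 2 - 7 / 48)]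
    have hgap : 0 < 2 * π * r * (24 * r ^ 4 - 7 * r ^ 2 + 3) := by positivity
    nlinarith [mul_le_mul_of_nonneg_right hs (by positivity : 0 ≤ 3 * r ^ 2 + 1)]
  rcases le_or_gt r (3 / 2) with hnear | hlarge
  · have hs := abs_sin_two_pi_mul_le (s := r - 1) (abs_le.2 ⟨by linarith, by linarith⟩)
    rw [mul_sub, mul_one, sin_sub_two_pi] at hs
    rw [hfactor]
    have hgap : 0 < 2 * π * |r - 1| * (r - 1) ^ 2 * (24 * r ^ 2 + 5) := by
      have hne := sub_ne_zero.2 hr1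
      positivity
    nlinarith
  · rw [abs_of_pos (by nlinarith : 0 < r ^ 2 - 1)]
    have hsin := mul_le_mul_of_nonneg_right (abs_sin_le_one (2 * π * r))
      (by positivity : 0 ≤ 3 * r ^ 2 + 1)
    have hpoly : 3 * r ^ 2 + 1 < 12 * r * (r ^ 2 - 1) := by nlinarith
    nlinarith [mul_le_mul_of_nonneg_right pi_gt_three.le (by nlinarith : 0 ≤ 4 * r * (r ^ 2 - 1))]

theorem rescaled_filter_abs_lt_one (r : ℝ) (hr : 0 ≤ r) (hr1 : r ≠ 1) :
    |(1 / π) * ∫ t in (0:ℝ)..(2 * π), (Real.cos t - 1/4) * Real.cos (r * t)| < 1 := by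
  have hπ := pi_pos
  rcases hr.eq_or_lt with rfl | hr0
  · have hval : ∫ t in (0:ℝ)..(2 * π), (cos t - 1 / 4) * cos (0 * t) = -(π / 2) := by
      simp only [zero_mul, cos_zero, mul_one]
      rw [intervalIntegral.integral_sub (continuous_cos.intervalIntegrable _ _)
        intervalIntegrable_const, integral_cos]
      simp only [sin_two_pi, sin_zero, intervalIntegral.integral_const, smul_eq_mul]
      ring
    rw [hval, show 1 / π * -(π / 2) = -(1 / 2) by field_simp]
    norm_num
  · have hsq : 0 < |r ^ 2 - 1| := abs_pos.2 fun h ↦ hr1 (by nlinarith)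
    rw [integral_cos_sub_quarter_mul_cos hr0.ne' hr1 (by linarith)]
    simp only [abs_mul, abs_div, abs_one, abs_of_pos hπ, abs_of_pos hr0,
      abs_of_pos (by positivity : (0 : ℝ) < 3 * r ^ 2 + 1), abs_of_pos (by norm_num : (0 : ℝ) < 4)]
    calc _ < 1 / π * (4 * π * r * |r ^ 2 - 1| / (4 * r * |r ^ 2 - 1|)) := by
          gcongr 1 / π * (?_ / _); exact abs_sin_two_pi_mul_mul_lt hr0 hr1
      _ = 1 := by field_simp
end

section
/- Let x = ωΔt with 0 < x < π/2. Then the quantity ω̃ = 2 sin(x/2)/(Δt √(cos x)) satisfies ω̃ ≥ ω, with equality only in the limit x → 0; moreover ω̃² = 4 sin²(x/2)/(Δt² cos x). -/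
open Real

theorem implicit_modified_frequency (ω Δt x : ℝ) (hω : 0 < ω) (hΔt : 0 < Δt)
    (hx : x = ω * Δt) (hx0 : 0 < x) (hxlt : x < π / 2) :
    (2 * Real.sin (x / 2) / (Δt * Real.sqrt (Real.cos x)) ≥ ω) ∧
    (2 * Real.sin (x / 2) / (Δt * Real.sqrt (Real.cos x))) ^ 2
      = 4 * Real.sin (x / 2) ^ 2 / (Δt ^ 2 * Real.cos x) := by
  have hc : 0 < Real.cos x := Real.cos_pos_of_mem_Ioo ⟨by linarith [Real.pi_pos], hxlt⟩
  have hsc : 0 < Real.sqrt (Real.cos x) := Real.sqrt_pos.mpr hc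
  have hch : 0 < Real.cos (x / 2) := Real.cos_pos_of_mem_Ioo
    ⟨by linarith [Real.pi_pos], by linarith⟩
  -- √(cos x) ≤ cos (x/2)
  have hle : Real.sqrt (Real.cos x) ≤ Real.cos (x / 2) := by
    have h1 : Real.cos x ≤ Real.cos (x / 2) ^ 2 := by
      have h2 : Real.cos (x/2) ^ 2 = 1/2 + Real.cos x / 2 := by
        rw [Real.cos_sq]; ring_nf
      nlinarith [Real.cos_le_one x]
    calc Real.sqrt (Real.cos x) ≤ Real.sqrt (Real.cos (x / 2) ^ 2) :=
          Real.sqrt_le_sqrt h1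
      _ = Real.cos (x / 2) := by rw [Real.sqrt_sq hch.le]
  -- x/2 < tan (x/2), hence (x/2) cos(x/2) < sin(x/2)
  have htan : x / 2 < Real.tan (x / 2) := Real.lt_tan (by linarith) (by linarith)
  have hsin : x / 2 * Real.cos (x / 2) < Real.sin (x / 2) := by
    have := (lt_div_iff₀ hch).mp (by rw [← Real.tan_eq_sin_div_cos]; exact htan)
    linarith
  have hkey : x * Real.sqrt (Real.cos x) ≤ 2 * Real.sin (x / 2) := by
    nlinarith
  constructor
  · rw [ge_iff_le, le_div_iff₀ (by positivity)]
    have hxe : ω * Δt = x := hx.symm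
    nlinarith
  · rw [div_pow, mul_pow, mul_pow, Real.sq_sqrt hc.le]
    ring_nf
end

section
/- Let u solve the 1D problem u″(t) = −λ²u(t) with u(0) = u₀ ∈ ℝ, u′(0) = 0, λ > 0, λ ≠ ω. Then the WaveHoltz map Π u₀ = (2/T)∫₀ᵀ(cos ωt − 1/4)u(t)dt equals β(λ)·u₀ where β(λ) = (2/T)∫₀ᵀ(cos ωt − 1/4)cos(λt)dt, and the iteration u₀^{(i+1)} = Πu₀^{(i)} converges to 0 geometrically with rate |β(λ)| < 1. -/
/-!
Writing `v = u - u₀ cos (λ t)` and `w = v'`, the energy `w² + λ² v²` is conserved and vanishes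
at `0`, so `u = u₀ cos (λ t)` and `Π u₀ = β u₀`. Product-to-sum and one period `T = 2π/ω` give,
with `x = λ T`, the closed form `β = -sin x (4π² + 3x²) / (2x (4π² - x²))`. As `x → 2π` this
tends to `1` in absolute value, so `|β| < 1` needs the quintic Taylor bound for `sin` on
`(0, π]` and within `π` below and `1.2` above `2π`; further out `|sin x| ≤ 1` suffices.
-/

open Real Filter Topology

namespace Real

theorem cos_le_one_sub_sq_div_two_add_pow_four (x : ℝ) :
    cos x ≤ 1 - x ^ 2 / 2 + x ^ 4 / 24 := by
  wlog hx : 0 ≤ x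
  · simpa [Even.neg_pow (by decide : Even 2), Even.neg_pow (by decide : Even 4)]
      using this (-x) (by linarith)
  let f (t : ℝ) : ℝ := 1 - t ^ 2 / 2 + t ^ 4 / 24 - cos t
  have hderiv (t : ℝ) : deriv f t = sin t - (t - t ^ 3 / 6) := by
    simp (disch := fun_prop) [f]
    ring
  have hmono : MonotoneOn f (Set.Ici 0) := by
    apply monotoneOn_of_deriv_nonneg (convex_Ici 0) (by fun_prop) (by fun_prop)
    grind [sin_ge_sub_cube, interior_Ici]
  have := hmono (by simp) hx hx
  grind [cos_zero]

theorem sin_le_sub_cube_add_pow_five {x : ℝ} (hx : 0 ≤ x) :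
    sin x ≤ x - x ^ 3 / 6 + x ^ 5 / 120 := by
  let f (t : ℝ) : ℝ := t - t ^ 3 / 6 + t ^ 5 / 120 - sin t
  have hderiv (t : ℝ) : deriv f t = 1 - t ^ 2 / 2 + t ^ 4 / 24 - cos t := by
    simp (disch := fun_prop) [f]
    ring
  have hmono : MonotoneOn f (Set.Ici 0) := by
    apply monotoneOn_of_deriv_nonneg (convex_Ici 0) (by fun_prop) (by fun_prop)
    grind [cos_le_one_sub_sq_div_two_add_pow_four]
  have := hmono (by simp) hx hx
  grind [sin_zero]

end Real

lemma eq_zero_of_hasDerivAt_harmonic {lam : ℝ} (hlam : lam ≠ 0) {v w : ℝ → ℝ}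
    (hv : ∀ t, HasDerivAt v (w t) t) (hw : ∀ t, HasDerivAt w (-(lam ^ 2) * v t) t)
    (hv0 : v 0 = 0) (hw0 : w 0 = 0) (t : ℝ) : v t = 0 := by
  have henergy (s : ℝ) : HasDerivAt (fun s => w s ^ 2 + lam ^ 2 * v s ^ 2) 0 s := by
    refine (((hw s).pow 2).add (((hv s).pow 2).const_mul (lam ^ 2))).congr_deriv ?_
    ring
  have hconst := is_const_of_deriv_eq_zero (fun s => (henergy s).differentiableAt)
    (fun s => (henergy s).deriv) t 0
  simp only [hv0, hw0] at hconst
  have : lam ^ 2 * v t ^ 2 = 0 := by nlinarith [sq_nonneg (w t), sq_nonneg (lam * v t)]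
  simpa [hlam] using this

lemma eq_mul_cos_of_hasDerivAt {lam u0 : ℝ} (hlam : lam ≠ 0) {u u' : ℝ → ℝ}
    (hu' : ∀ t, HasDerivAt u (u' t) t) (hu'' : ∀ t, HasDerivAt u' (-(lam ^ 2) * u t) t)
    (h0 : u 0 = u0) (h0' : u' 0 = 0) (t : ℝ) : u t = u0 * cos (lam * t) := by
  have hcos (s : ℝ) :
      HasDerivAt (fun s => u0 * cos (lam * s)) (-(u0 * lam * sin (lam * s))) s := by
    refine ((((hasDerivAt_id' s).const_mul lam).cos).const_mul u0).congr_deriv ?_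
    ring
  have hsin (s : ℝ) : HasDerivAt (fun s => -(u0 * lam * sin (lam * s)))
      (-(lam ^ 2) * (u0 * cos (lam * s))) s := by
    refine ((((hasDerivAt_id' s).const_mul lam).sin).const_mul (u0 * lam)).neg.congr_deriv ?_
    ring
  have := eq_zero_of_hasDerivAt_harmonic hlam (v := fun s => u s - u0 * cos (lam * s))
    (fun s => (hu' s).sub (hcos s)) (fun s => ((hu'' s).sub (hsin s)).congr_deriv (by ring))
    (by simp [h0]) (by simp [h0']) t
  linarith

lemma integral_cos_sub_quarter_mul_cos_s19 {ω lam : ℝ} (h₁ : ω - lam ≠ 0) (h₂ : ω + lam ≠ 0)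
    (h₃ : lam ≠ 0) (T : ℝ) :
    ∫ t in (0:ℝ)..T, (cos (ω * t) - 1 / 4) * cos (lam * t)
      = sin ((ω - lam) * T) / (2 * (ω - lam)) + sin ((ω + lam) * T) / (2 * (ω + lam))
        - sin (lam * T) / (4 * lam) := by
  have hsin (c t : ℝ) : HasDerivAt (fun t => sin (c * t)) (cos (c * t) * c) t := by
    simpa using ((hasDerivAt_id t).const_mul c).sin
  have hderiv (t : ℝ) : HasDerivAt (fun t => sin ((ω - lam) * t) / (2 * (ω - lam))
      + sin ((ω + lam) * t) / (2 * (ω + lam)) - sin (lam * t) / (4 * lam))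
      ((cos (ω * t) - 1 / 4) * cos (lam * t)) t := by
    refine ((((hsin _ t).div_const _).add ((hsin _ t).div_const _)).sub
      ((hsin _ t).div_const _)).congr_deriv ?_
    rw [sub_mul, add_mul, cos_sub, cos_add]
    field_simp
    ring
  rw [intervalIntegral.integral_eq_sub_of_hasDerivAt (fun t _ => hderiv t)
    (by apply Continuous.intervalIntegrable; fun_prop)]
  simp

namespace WaveHoltz

lemma pi_sq_bounds : 9.869 < π ^ 2 ∧ π ^ 2 < 9.8697 := by
  constructor <;> nlinarith [pi_gt_d6, pi_lt_d6]

lemma sin_mul_lt_of_le_pi {x : ℝ} (hx : 0 < x) (hxπ : x ≤ π) :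
    sin x * (4 * π ^ 2 + 3 * x ^ 2) < 2 * x * (4 * π ^ 2 - x ^ 2) := by
  have hx2 : x ^ 2 ≤ π ^ 2 := pow_le_pow_left₀ hx.le hxπ 2
  have hsin := mul_le_mul_of_nonneg_right (sin_le_sub_cube_add_pow_five hx.le)
    (by positivity : (0 : ℝ) ≤ 4 * π ^ 2 + 3 * x ^ 2)
  nlinarith [pi_sq_bounds, pow_pos hx 3, pow_pos hx 5,
    mul_nonneg (sub_nonneg.2 hx2) (sq_nonneg x),
    mul_nonneg (sub_nonneg.2 hx2) (pow_pos hx 4).le]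

lemma sin_mul_lt_of_two_pi_sub {z : ℝ} (hz : 0 < z) (hzπ : z < π) :
    sin z * (4 * π ^ 2 + 3 * (2 * π - z) ^ 2)
      < 2 * (2 * π - z) * (4 * π ^ 2 - (2 * π - z) ^ 2) := by
  have hsin := mul_le_mul_of_nonneg_right (sin_le_sub_cube_add_pow_five hz.le)
    (by positivity : (0 : ℝ) ≤ 4 * π ^ 2 + 3 * (2 * π - z) ^ 2)
  have hpos : 0 < (8 * π ^ 2 / 3 - 1) - 2 * π * z + z ^ 2 / 2
      - z ^ 2 / 120 * (16 * π ^ 2 - 12 * π * z + 3 * z ^ 2) := by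
    nlinarith [pi_sq_bounds, pi_gt_d6, mul_pos hz hz, pow_pos hz 3, pow_pos hz 4,
      mul_nonneg (sub_nonneg.2 hzπ.le) hz.le,
      mul_nonneg (mul_nonneg (sub_nonneg.2 hzπ.le) hz.le) hz.le,
      mul_nonneg (mul_nonneg (mul_nonneg (sub_nonneg.2 hzπ.le) hz.le) hz.le) hz.le,
      sq_nonneg (π - z), mul_nonneg (sq_nonneg (π - z)) hz.le,
      mul_nonneg (mul_nonneg (sq_nonneg (π - z)) hz.le) hz.le]
  -- replacing `sin z` by its quintic bound, the gap between the two sides is `z ^ 3 * _`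
  nlinarith [mul_pos (pow_pos hz 3) hpos]

lemma sin_mul_lt_of_two_pi_add {z : ℝ} (hz : 0 < z) (hz1 : z ≤ 1.2) :
    sin z * (4 * π ^ 2 + 3 * (2 * π + z) ^ 2)
      < 2 * (2 * π + z) * ((2 * π + z) ^ 2 - 4 * π ^ 2) := by
  have hsin := mul_le_mul_of_nonneg_right (sin_le_sub_cube_add_pow_five hz.le)
    (by positivity : (0 : ℝ) ≤ 4 * π ^ 2 + 3 * (2 * π + z) ^ 2)
  have hpos : 0 < (8 * π ^ 2 / 3 - 1) + 2 * π * z + z ^ 2 / 2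
      - z ^ 2 / 120 * (16 * π ^ 2 + 12 * π * z + 3 * z ^ 2) := by
    nlinarith [pi_sq_bounds, pi_gt_d6, pi_lt_d6, mul_pos hz hz, pow_pos hz 3, pow_pos hz 4,
      mul_nonneg (sub_nonneg.2 hz1) hz.le,
      mul_nonneg (mul_nonneg (sub_nonneg.2 hz1) hz.le) hz.le]
  nlinarith [mul_pos (pow_pos hz 3) hpos]

lemma four_pi_sq_add_three_sq_lt {x : ℝ} (hx : 2 * π + 1.2 < x) :
    4 * π ^ 2 + 3 * x ^ 2 < 2 * x * (x ^ 2 - 4 * π ^ 2) := by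
  have hx7 : (7.483 : ℝ) < x := by linarith [pi_gt_d6]
  nlinarith [pi_sq_bounds, sq_nonneg (x - 7.483), mul_nonneg (sub_nonneg.2 hx7.le) (sq_nonneg x)]

lemma abs_sin_mul_lt {x : ℝ} (hx : 0 < x) (hx2π : x ≠ 2 * π) :
    |sin x| * (4 * π ^ 2 + 3 * x ^ 2) < 2 * x * |4 * π ^ 2 - x ^ 2| := by
  rcases le_or_gt x π with hxπ | hπx
  · rw [abs_of_nonneg (sin_nonneg_of_nonneg_of_le_pi hx.le hxπ),
      abs_of_pos (by nlinarith [pi_pos])]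
    exact sin_mul_lt_of_le_pi hx hxπ
  rcases hx2π.lt_or_gt with hx2π | h2πx
  · obtain ⟨z, rfl⟩ : ∃ z, x = 2 * π - z := ⟨2 * π - x, by ring⟩
    rw [sin_two_pi_sub, abs_neg, abs_of_nonneg (sin_nonneg_of_nonneg_of_le_pi (by linarith)
      (by linarith)), abs_of_pos (by nlinarith [pi_pos])]
    exact sin_mul_lt_of_two_pi_sub (by linarith) (by linarith)
  rw [abs_of_neg (a := 4 * π ^ 2 - x ^ 2) (by nlinarith [pi_pos]), neg_sub]
  rcases le_or_gt x (2 * π + 1.2) with hx12 | hx12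
  · obtain ⟨z, rfl⟩ : ∃ z, x = 2 * π + z := ⟨x - 2 * π, by ring⟩
    rw [add_comm (2 * π) z, sin_add_two_pi, add_comm z,
      abs_of_nonneg (sin_nonneg_of_nonneg_of_le_pi (by linarith) (by linarith [pi_gt_three]))]
    exact sin_mul_lt_of_two_pi_add (by linarith) (by linarith)
  · calc |sin x| * (4 * π ^ 2 + 3 * x ^ 2) ≤ 4 * π ^ 2 + 3 * x ^ 2 :=
          mul_le_of_le_one_left (by positivity) (abs_sin_le_one x)
      _ < 2 * x * (x ^ 2 - 4 * π ^ 2) := four_pi_sq_add_three_sq_lt hx12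

noncomputable def waveholtzFilter (ω T : ℝ) (u : ℝ → ℝ) : ℝ :=
  (2 / T) * ∫ t in (0:ℝ)..T, (cos (ω * t) - 1 / 4) * u t

lemma waveholtzFilter_const_mul (ω T c : ℝ) (u : ℝ → ℝ) :
    waveholtzFilter ω T (fun t => c * u t) = c * waveholtzFilter ω T u := by
  simp only [waveholtzFilter, mul_left_comm _ c, intervalIntegral.integral_const_mul]

lemma waveholtzFilter_cos {ω lam T : ℝ} (hω : 0 < ω) (hlam : 0 < lam) (hne : lam ≠ ω)
    (hT : T = 2 * π / ω) :
    waveholtzFilter ω T (fun t => cos (lam * t))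
      = -(sin (lam * T) * (4 * π ^ 2 + 3 * (lam * T) ^ 2))
          / (2 * (lam * T) * (4 * π ^ 2 - (lam * T) ^ 2)) := by
  have hT0 : 0 < T := hT ▸ by positivity
  have hωT : ω * T = 2 * π := by rw [hT]; field_simp
  have hsub : ω - lam ≠ 0 := sub_ne_zero.2 hne.symm
  have h4π : 4 * π ^ 2 = (ω * T) ^ 2 := by rw [hωT]; ring
  have hden : 4 * π ^ 2 - (lam * T) ^ 2 ≠ 0 := by
    rw [h4π, sq_sub_sq, ← add_mul, ← sub_mul]
    exact mul_ne_zero (mul_ne_zero (by positivity) hT0.ne') (mul_ne_zero hsub hT0.ne')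
  rw [waveholtzFilter, integral_cos_sub_quarter_mul_cos_s19 hsub (by positivity) hlam.ne',
    sub_mul, add_mul, hωT, sin_two_pi_sub, add_comm (2 * π), sin_add_two_pi,
    eq_div_iff (mul_ne_zero (by positivity) hden), h4π]
  field_simp
  ring

lemma abs_waveholtzFilter_cos_lt_one {ω lam T : ℝ} (hω : 0 < ω) (hlam : 0 < lam)
    (hne : lam ≠ ω) (hT : T = 2 * π / ω) :
    |waveholtzFilter ω T (fun t => cos (lam * t))| < 1 := by
  have hT0 : 0 < T := hT ▸ by positivity
  have hx : 0 < lam * T := mul_pos hlam hT0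
  have hx2π : lam * T ≠ 2 * π := by
    intro h
    rw [hT, mul_div_assoc', div_eq_iff hω.ne', mul_comm lam] at h
    exact hne (mul_left_cancel₀ (by positivity) h)
  have hlt := abs_sin_mul_lt hx hx2π
  rw [waveholtzFilter_cos hω hlam hne hT, abs_div, abs_neg, abs_mul,
    abs_of_pos (by positivity : (0 : ℝ) < 4 * π ^ 2 + 3 * (lam * T) ^ 2), abs_mul,
    abs_of_pos (by positivity : (0 : ℝ) < 2 * (lam * T)),
    div_lt_one (hlt.trans_le' (by positivity))]
  exact hlt

end WaveHoltz

theorem waveholtz_mode_contraction (ω lam T u0 : ℝ) (hω : 0 < ω) (hlam : 0 < lam)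
    (hne : lam ≠ ω) (hT : T = 2 * π / ω)
    (u u' : ℝ → ℝ)
    (hu' : ∀ t, HasDerivAt u (u' t) t)
    (hu'' : ∀ t, HasDerivAt u' (-(lam ^ 2) * u t) t)
    (h0 : u 0 = u0) (h0' : u' 0 = 0) :
    ((2 / T) * ∫ t in (0:ℝ)..T, (Real.cos (ω * t) - 1/4) * u t)
      = ((2 / T) * ∫ t in (0:ℝ)..T, (Real.cos (ω * t) - 1/4) * Real.cos (lam * t)) * u0 ∧
    |(2 / T) * ∫ t in (0:ℝ)..T, (Real.cos (ω * t) - 1/4) * Real.cos (lam * t)| < 1 ∧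
    Tendsto (fun i : ℕ =>
        ((2 / T) * ∫ t in (0:ℝ)..T, (Real.cos (ω * t) - 1/4) * Real.cos (lam * t)) ^ i * u0)
      atTop (𝓝 0) := by
  have hu : u = fun t => u0 * cos (lam * t) :=
    funext (eq_mul_cos_of_hasDerivAt hlam.ne' hu' hu'' h0 h0')
  have hβ := WaveHoltz.abs_waveholtzFilter_cos_lt_one hω hlam hne hT
  refine ⟨?_, hβ, ?_⟩
  · subst hu
    rw [mul_comm _ u0]
    exact WaveHoltz.waveholtzFilter_const_mul ω T u0 _
  · have h := (tendsto_pow_atTop_nhds_zero_of_abs_lt_one hβ).mul_const u0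
    rwa [zero_mul] at h
end
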